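/- Let P be a polytope in E^d and let w ∈ E^d be a nonzero vector. Then the face F_w(P) of P exposed by w has affine span of dimension at least 1 if and only if there exists an edge E of P with w ∈ N(E). -/
import Mathlib

open RealInnerProductSpace

/-- The face of `P` exposed by `w`: points of `P` where `⟪w, ·⟫` attains its minimum over `P`. -/
def exposedFaceBy {d : ℕ} (P : Set (EuclideanSpace ℝ (Fin d)))
    (w : EuclideanSpace ℝ (Fin d)) : Set (EuclideanSpace ℝ (Fin d)) :=
  {x | x ∈ P ∧ ∀ y ∈ P, ⟪w, x⟫ ≤ ⟪w, y⟫}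

/-- `P` is a polytope: the convex hull of a nonempty finite set of points. -/
def IsPolytope {d : ℕ} (P : Set (EuclideanSpace ℝ (Fin d))) : Prop :=
  ∃ S : Finset (EuclideanSpace ℝ (Fin d)), S.Nonempty ∧ P = convexHull ℝ (S : Set _)

/-- `E` is an edge of `P`: an exposed face of `P` whose affine span has dimension 1. -/
def IsEdge {d : ℕ} (P E : Set (EuclideanSpace ℝ (Fin d))) : Prop :=
  (∃ w, E = exposedFaceBy P w) ∧ Module.finrank ℝ (affineSpan ℝ E).direction = 1

/-- The normal cone of an edge `E` of `P`. -/
def normalCone {d : ℕ} (P E : Set (EuclideanSpace ℝ (Fin d))) :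
    Set (EuclideanSpace ℝ (Fin d)) :=
  {w | ∀ x ∈ E, ∀ y ∈ P, ⟪w, x⟫ ≤ ⟪w, y⟫}

section Aux

variable {d : ℕ}

lemma inner_isLinear (v : EuclideanSpace ℝ (Fin d)) :
    IsLinearMap ℝ (fun y : EuclideanSpace ℝ (Fin d) => ⟪v, y⟫) :=
  ⟨fun a b => inner_add_right v a b, fun c a => real_inner_smul_right v a c⟩

open Classical in
/-- The subset of `S` minimizing `⟪v,·⟫`. -/
noncomputable def minSet (S : Finset (EuclideanSpace ℝ (Fin d)))
    (v : EuclideanSpace ℝ (Fin d)) : Finset (EuclideanSpace ℝ (Fin d)) :=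
  S.filter (fun s => ∀ y ∈ S, ⟪v, s⟫ ≤ ⟪v, y⟫)

lemma mem_minSet {S : Finset (EuclideanSpace ℝ (Fin d))} {v s : EuclideanSpace ℝ (Fin d)} :
    s ∈ minSet S v ↔ s ∈ S ∧ ∀ y ∈ S, ⟪v, s⟫ ≤ ⟪v, y⟫ := by
  classical simp [minSet]

lemma minSet_nonempty {S : Finset (EuclideanSpace ℝ (Fin d))} (hS : S.Nonempty)
    (v : EuclideanSpace ℝ (Fin d)) : (minSet S v).Nonempty := by
  obtain ⟨x0, hx0S, hx0⟩ := S.exists_min_image (fun s => ⟪v, s⟫) hS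
  exact ⟨x0, mem_minSet.mpr ⟨hx0S, hx0⟩⟩

lemma face_hull (S : Finset (EuclideanSpace ℝ (Fin d))) (hS : S.Nonempty)
    (v : EuclideanSpace ℝ (Fin d)) :
    exposedFaceBy (convexHull ℝ (S : Set (EuclideanSpace ℝ (Fin d)))) v
      = convexHull ℝ ((minSet S v : Finset (EuclideanSpace ℝ (Fin d))) :
          Set (EuclideanSpace ℝ (Fin d))) := by
  classical
  obtain ⟨x0, hx0⟩ := minSet_nonempty hS v
  rw [mem_minSet] at hx0
  set m := ⟪v, x0⟫ with hm
  have hge : ∀ y ∈ convexHull ℝ (S : Set (EuclideanSpace ℝ (Fin d))), m ≤ ⟪v, y⟫ := by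
    intro y hy
    refine convexHull_min (fun s hs => hx0.2 s hs) (convex_halfSpace_ge (inner_isLinear v) m) hy
  apply Set.Subset.antisymm
  · rintro p ⟨hpP, hpmin⟩
    have hpm : ⟪v, p⟫ = m :=
      le_antisymm (hpmin x0 (subset_convexHull ℝ _ hx0.1)) (hge p hpP)
    obtain ⟨c, hc0, hc1, hcx⟩ := Finset.mem_convexHull'.mp hpP
    have hip : ∑ s ∈ S, c s * ⟪v, s⟫ = ⟪v, p⟫ := by
      rw [← hcx, inner_sum]
      exact Finset.sum_congr rfl fun s _ => (real_inner_smul_right v s (c s)).symm ▸ rfl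
    have hsum : ∑ s ∈ S, c s * (⟪v, s⟫ - m) = 0 := by
      have : ∑ s ∈ S, c s * (⟪v, s⟫ - m)
          = (∑ s ∈ S, c s * ⟪v, s⟫) - (∑ s ∈ S, c s) * m := by
        rw [Finset.sum_mul, ← Finset.sum_sub_distrib]
        exact Finset.sum_congr rfl fun s _ => by ring
      rw [this, hip, hpm, hc1, one_mul, sub_self]
    have hterm : ∀ s ∈ S, c s * (⟪v, s⟫ - m) = 0 := by
      rw [← Finset.sum_eq_zero_iff_of_nonneg
        (fun s hs => mul_nonneg (hc0 s hs) (sub_nonneg.mpr (hx0.2 s hs)))]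
      exact hsum
    have hczero : ∀ s ∈ S, s ∉ minSet S v → c s = 0 := by
      intro s hsS hsT
      have hne : ⟪v, s⟫ - m ≠ 0 := by
        intro h
        apply hsT
        rw [mem_minSet]
        refine ⟨hsS, fun y hy => ?_⟩
        have : ⟪v, s⟫ = m := by linarith [sub_eq_zero.mp h]
        rw [this]; exact hx0.2 y hy
      have := hterm s hsS
      exact (mul_eq_zero.mp this).resolve_right hne
    have hTsub : minSet S v ⊆ S := fun s hs => (mem_minSet.mp hs).1
    refine Finset.mem_convexHull'.mpr ⟨c, fun y hy => hc0 y (mem_minSet.mp hy).1, ?_, ?_⟩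
    · rw [Finset.sum_subset hTsub (fun s hs hns => hczero s hs hns)]
      exact hc1
    · rw [Finset.sum_subset hTsub
        (fun s hs hns => by rw [hczero s hs hns, zero_smul])]
      exact hcx
  · intro p hp
    have hsub : (minSet S v : Set (EuclideanSpace ℝ (Fin d))) ⊆ (S : Set _) := by
      intro s hs; exact_mod_cast (mem_minSet.mp hs).1
    have hpS : p ∈ convexHull ℝ (S : Set (EuclideanSpace ℝ (Fin d))) :=
      convexHull_mono hsub hp
    have hple : ⟪v, p⟫ ≤ m :=
      convexHull_min (fun s hs => (mem_minSet.mp hs).2 x0 hx0.1)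
        (convex_halfSpace_le (inner_isLinear v) m) hp
    exact ⟨hpS, fun y hy => hple.trans (hge y hy)⟩

lemma exists_pos_forall {α : Type*} (s : Finset α) (g c : α → ℝ)
    (hg : ∀ t ∈ s, 0 < g t) : ∃ ε : ℝ, 0 < ε ∧ ∀ t ∈ s, ε * |c t| < g t := by
  rcases s.eq_empty_or_nonempty with rfl | hne
  · exact ⟨1, one_pos, by simp⟩
  · refine ⟨s.inf' hne (fun t => g t / (|c t| + 1)), ?_, ?_⟩
    · rw [Finset.lt_inf'_iff]
      intro t ht
      exact div_pos (hg t ht) (by positivity)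
    · intro t ht
      have h1 : s.inf' hne (fun t => g t / (|c t| + 1)) ≤ g t / (|c t| + 1) :=
        Finset.inf'_le _ ht
      have h2 : (g t / (|c t| + 1)) * |c t| < g t := by
        rw [div_mul_eq_mul_div, div_lt_iff₀ (by positivity)]
        exact mul_lt_mul_of_pos_left (lt_add_one _) (hg t ht)
      calc s.inf' hne (fun t => g t / (|c t| + 1)) * |c t|
          ≤ (g t / (|c t| + 1)) * |c t| := mul_le_mul_of_nonneg_right h1 (abs_nonneg _)
        _ < g t := h2

lemma exists_exposed_vertex (T : Finset (EuclideanSpace ℝ (Fin d))) :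
    T.Nonempty → ∃ u : EuclideanSpace ℝ (Fin d), ∃ x ∈ T,
      ∀ t ∈ T, t ≠ x → ⟪u, x⟫ < ⟪u, t⟫ := by
  classical
  induction T using Finset.cons_induction with
  | empty => intro h; exact absurd h Finset.not_nonempty_empty
  | cons a T' ha ih =>
    intro _
    rcases T'.eq_empty_or_nonempty with rfl | hT'
    · refine ⟨0, a, Finset.mem_cons_self a _, ?_⟩
      intro t ht hne
      rcases Finset.mem_cons.mp ht with rfl | h
      · exact absurd rfl hne
      · exact absurd h (Finset.notMem_empty t)
    obtain ⟨u, x, hxT, hmin⟩ := ih hT'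
    have hax : a ≠ x := fun h => ha (h ▸ hxT)
    rcases lt_trichotomy ⟪u, a⟫ ⟪u, x⟫ with hlt | heq | hgt
    · refine ⟨u, a, Finset.mem_cons_self a _, ?_⟩
      intro t ht hne
      rcases Finset.mem_cons.mp ht with rfl | htT'
      · exact absurd rfl hne
      · rcases eq_or_ne t x with rfl | htx
        · exact hlt
        · exact hlt.trans (hmin t htT' htx)
    · -- perturb
      obtain ⟨ε, hε, hεlt⟩ := exists_pos_forall (T'.erase x)
        (fun t => ⟪u, t⟫ - ⟪u, x⟫) (fun t => ⟪a - x, t - x⟫)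
        (fun t ht => sub_pos.mpr (hmin t (Finset.mem_of_mem_erase ht)
          (Finset.ne_of_mem_erase ht)))
      refine ⟨u + ε • (a - x), x, Finset.mem_cons_of_mem hxT, ?_⟩
      intro t ht hne
      have key : ∀ z : EuclideanSpace ℝ (Fin d),
          ⟪u + ε • (a - x), z⟫ - ⟪u + ε • (a - x), x⟫
            = (⟪u, z⟫ - ⟪u, x⟫) + ε * ⟪a - x, z - x⟫ := by
        intro z
        rw [inner_add_left, inner_add_left, real_inner_smul_left, real_inner_smul_left,
          inner_sub_right]
        ring
      rw [← sub_pos]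
      rcases Finset.mem_cons.mp ht with rfl | htT'
      · rw [key t, heq, sub_self, zero_add]
        have hnz : t - x ≠ 0 := sub_ne_zero.mpr hax
        have : (0:ℝ) < ⟪t - x, t - x⟫ := by
          rw [real_inner_self_eq_norm_sq]
          exact pow_pos (norm_pos_iff.mpr hnz) 2
        exact mul_pos hε this
      · have htx : t ≠ x := hne
        have h1 := hεlt t (Finset.mem_erase.mpr ⟨htx, htT'⟩)
        have h2 : ε * ⟪a - x, t - x⟫ ≥ -(ε * |⟪a - x, t - x⟫|) := by
          have := abs_nonneg (⟪a - x, t - x⟫ : ℝ)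
          nlinarith [neg_abs_le (⟪a - x, t - x⟫ : ℝ), hε.le]
        rw [key t]
        have := hmin t htT' htx
        linarith
    · refine ⟨u, x, Finset.mem_cons_of_mem hxT, ?_⟩
      intro t ht hne
      rcases Finset.mem_cons.mp ht with rfl | htT'
      · exact hgt
      · exact hmin t htT' hne

end Aux

/-- For a polytope `P` and a nonzero vector `w`, the exposed face `F_w(P)` has affine span
of dimension at least 1 if and only if there is an edge `E` of `P` with `w ∈ N(E)`. -/
theorem exposedFace_dim_ge_one_iff_exists_edge {d : ℕ}
    (P : Set (EuclideanSpace ℝ (Fin d))) (hP : IsPolytope P)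
    (w : EuclideanSpace ℝ (Fin d)) (hw : w ≠ 0) :
    1 ≤ Module.finrank ℝ (affineSpan ℝ (exposedFaceBy P w)).direction ↔
      ∃ E : Set (EuclideanSpace ℝ (Fin d)), IsEdge P E ∧ w ∈ normalCone P E := by
  classical
  obtain ⟨S, hS, rfl⟩ := hP
  constructor
  · intro hdim
    set T := minSet S w with hTdef
    have hF := face_hull S hS w
    have hTne : T.Nonempty := minSet_nonempty hS w
    -- T has two distinct points
    have h2 : ∃ a ∈ T, ∃ b ∈ T, a ≠ b := by
      by_contra hcon
      push_neg at hcon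
      obtain ⟨x0, hx0⟩ := hTne
      have hsingle : (T : Set (EuclideanSpace ℝ (Fin d))) = {x0} := by
        ext t
        constructor
        · intro ht; exact hcon t ht x0 hx0
        · intro ht
          rw [Set.mem_singleton_iff] at ht
          rw [ht]; exact_mod_cast hx0
      rw [hF, hsingle, convexHull_singleton, direction_affineSpan,
        vectorSpan_singleton] at hdim
      simp at hdim
    obtain ⟨a, haT, b, hbT, hab⟩ := h2
    obtain ⟨u, x, hxT, hux⟩ := exists_exposed_vertex T hTne
    have herase : (T.erase x).Nonempty := by
      by_cases h : a = x
      · refine ⟨b, Finset.mem_erase.mpr ⟨fun hbx => hab (h.trans hbx.symm), hbT⟩⟩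
      · exact ⟨a, Finset.mem_erase.mpr ⟨h, haT⟩⟩
    have hαpos : ∀ t ∈ T.erase x, 0 < ⟪u, t - x⟫ := by
      intro t ht
      rw [inner_sub_right]
      exact sub_pos.mpr (hux t (Finset.mem_of_mem_erase ht) (Finset.ne_of_mem_erase ht))
    set D := (T.erase x).image (fun t => (⟪u, t - x⟫)⁻¹ • (t - x)) with hD
    have hDne : D.Nonempty := herase.image _
    obtain ⟨g, d0, hd0D, hgmin⟩ := exists_exposed_vertex D hDne
    obtain ⟨t0, ht0, ht0d⟩ := Finset.mem_image.mp hd0D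
    have ht0T : t0 ∈ T := Finset.mem_of_mem_erase ht0
    have ht0x : t0 ≠ x := Finset.ne_of_mem_erase ht0
    set hv := g - ⟪g, d0⟫ • u with hhv
    -- key computation
    have hcomp : ∀ t ∈ T.erase x,
        ⟪hv, t - x⟫ = ⟪u, t - x⟫ * (⟪g, (⟪u, t - x⟫)⁻¹ • (t - x)⟫ - ⟪g, d0⟫) := by
      intro t ht
      have hα : (⟪u, t - x⟫ : ℝ) ≠ 0 := ne_of_gt (hαpos t ht)
      have hgd : ⟪g, (⟪u, t - x⟫)⁻¹ • (t - x)⟫ = (⟪u, t - x⟫)⁻¹ * ⟪g, t - x⟫ :=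
        real_inner_smul_right _ _ _
      rw [hhv, inner_sub_left, real_inner_smul_left, hgd, mul_sub, ← mul_assoc,
        mul_inv_cancel₀ hα, one_mul]
      ring
    have hkey : ∀ t ∈ T.erase x, 0 ≤ ⟪hv, t - x⟫
        ∧ (⟪hv, t - x⟫ = 0 ↔ (⟪u, t - x⟫)⁻¹ • (t - x) = d0) := by
      intro t ht
      have hα := hαpos t ht
      have hmem : (⟪u, t - x⟫)⁻¹ • (t - x) ∈ D :=
        Finset.mem_image.mpr ⟨t, ht, rfl⟩
      rcases eq_or_ne ((⟪u, t - x⟫)⁻¹ • (t - x)) d0 with hd | hd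
      · constructor
        · rw [hcomp t ht, hd, sub_self, mul_zero]
        · rw [hcomp t ht, hd, sub_self, mul_zero]
          simp [hd]
      · have hlt : ⟪g, d0⟫ < ⟪g, (⟪u, t - x⟫)⁻¹ • (t - x)⟫ := hgmin _ hmem hd
        have hpos : 0 < ⟪hv, t - x⟫ := by
          rw [hcomp t ht]
          exact mul_pos hα (sub_pos.mpr hlt)
        exact ⟨hpos.le, ⟨fun h => absurd h (ne_of_gt hpos), fun h => absurd h hd⟩⟩
    -- gap for points outside T
    have hxS : x ∈ S := (mem_minSet.mp hxT).1
    have hxminS : ∀ y ∈ S, ⟪w, x⟫ ≤ ⟪w, y⟫ := (mem_minSet.mp hxT).2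
    have hgap : ∀ s ∈ S \ T, 0 < ⟪w, s⟫ - ⟪w, x⟫ := by
      intro s hs
      obtain ⟨hsS, hsT⟩ := Finset.mem_sdiff.mp hs
      rcases lt_or_eq_of_le (hxminS s hsS) with h | h
      · linarith
      · exfalso
        apply hsT
        rw [hTdef, mem_minSet]
        exact ⟨hsS, fun y hy => h ▸ hxminS y hy⟩
    obtain ⟨ε, hε, hεS⟩ := exists_pos_forall (S \ T)
      (fun s => ⟪w, s⟫ - ⟪w, x⟫) (fun s => ⟪hv, x⟫ - ⟪hv, s⟫) hgap
    set N := ε⁻¹ with hNdef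
    have hN : 0 < N := inv_pos.mpr hε
    set w' := N • w + hv with hw'
    have key2 : ∀ z : EuclideanSpace ℝ (Fin d),
        ⟪w', z⟫ - ⟪w', x⟫ = N * (⟪w, z⟫ - ⟪w, x⟫) + ⟪hv, z - x⟫ := by
      intro z
      rw [hw', inner_add_left, inner_add_left, real_inner_smul_left, real_inner_smul_left,
        inner_sub_right]
      ring
    -- strict bound outside T
    have houtside : ∀ s ∈ S \ T, 0 < N * (⟪w, s⟫ - ⟪w, x⟫) + ⟪hv, s - x⟫ := by
      intro s hs
      have h1 := hεS s hs
      have h2 : |⟪hv, x⟫ - ⟪hv, s⟫| < N * (⟪w, s⟫ - ⟪w, x⟫) := by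
        have := hgap s hs
        rw [hNdef]
        rw [← lt_div_iff₀' hε] at h1
        calc |⟪hv, x⟫ - ⟪hv, s⟫| < (⟪w, s⟫ - ⟪w, x⟫) / ε := h1
          _ = ε⁻¹ * (⟪w, s⟫ - ⟪w, x⟫) := by rw [div_eq_inv_mul]
      have h3 : ⟪hv, x⟫ - ⟪hv, s⟫ ≤ |⟪hv, x⟫ - ⟪hv, s⟫| := le_abs_self _
      have h4 : ⟪hv, s - x⟫ = ⟪hv, s⟫ - ⟪hv, x⟫ := inner_sub_right hv s x
      linarith
    -- values on T
    have honT : ∀ t ∈ T, ⟪w, t⟫ = ⟪w, x⟫ := by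
      intro t ht
      exact le_antisymm ((mem_minSet.mp ht).2 x hxS) (hxminS t (mem_minSet.mp ht).1)
    -- x minimizes w' over S
    have hxmin : ∀ y ∈ S, ⟪w', x⟫ ≤ ⟪w', y⟫ := by
      intro y hy
      rw [← sub_nonneg, key2 y]
      by_cases hyT : y ∈ T
      · rw [honT y hyT, sub_self, mul_zero, zero_add]
        rcases eq_or_ne y x with rfl | hyx
        · simp
        · exact (hkey y (Finset.mem_erase.mpr ⟨hyx, hyT⟩)).1
      · exact (houtside y (Finset.mem_sdiff.mpr ⟨hy, hyT⟩)).le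
    set A := minSet S w' with hAdef
    have hxA : x ∈ A := mem_minSet.mpr ⟨hxS, hxmin⟩
    have ht0A : t0 ∈ A := by
      have ht0S : t0 ∈ S := (mem_minSet.mp ht0T).1
      have hval : ⟪w', t0⟫ = ⟪w', x⟫ := by
        have := key2 t0
        rw [honT t0 ht0T, sub_self, mul_zero, zero_add,
          ((hkey t0 ht0).2).mpr ht0d] at this
        linarith
      exact mem_minSet.mpr ⟨ht0S, fun y hy => hval ▸ hxmin y hy⟩
    -- A is contained in T and in the line
    have hAprop : ∀ s ∈ A, s ∈ T ∧ s - x ∈ Submodule.span ℝ {d0} := by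
      intro s hsA
      obtain ⟨hsS, hsmin⟩ := mem_minSet.mp hsA
      have hzero : N * (⟪w, s⟫ - ⟪w, x⟫) + ⟪hv, s - x⟫ = 0 := by
        have h1 : ⟪w', s⟫ ≤ ⟪w', x⟫ := hsmin x hxS
        have h2 : ⟪w', x⟫ ≤ ⟪w', s⟫ := hxmin s hsS
        have := key2 s
        linarith
      have hsT : s ∈ T := by
        by_contra hsT
        exact absurd hzero (ne_of_gt (houtside s (Finset.mem_sdiff.mpr ⟨hsS, hsT⟩)))
      refine ⟨hsT, ?_⟩
      rcases eq_or_ne s x with rfl | hsx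
      · simp
      · have hse : s ∈ T.erase x := Finset.mem_erase.mpr ⟨hsx, hsT⟩
        have hvz : ⟪hv, s - x⟫ = 0 := by
          rw [honT s hsT, sub_self, mul_zero, zero_add] at hzero
          exact hzero
        have hd := ((hkey s hse).2).mp hvz
        rw [Submodule.mem_span_singleton]
        refine ⟨⟪u, s - x⟫, ?_⟩
        have hα : (⟪u, s - x⟫ : ℝ) ≠ 0 := ne_of_gt (hαpos s hse)
        rw [← hd, smul_smul, mul_inv_cancel₀ hα, one_smul]
    have hE := face_hull S hS w'
    have hd0ne : d0 ≠ 0 := by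
      rw [← ht0d]
      exact smul_ne_zero (inv_ne_zero (ne_of_gt (hαpos t0 ht0))) (sub_ne_zero.mpr ht0x)
    refine ⟨exposedFaceBy (convexHull ℝ (S : Set (EuclideanSpace ℝ (Fin d)))) w',
      ⟨⟨w', rfl⟩, ?_⟩, ?_⟩
    · -- dimension exactly 1
      rw [hE]
      apply le_antisymm
      · -- ≤ 1
        have hle : affineSpan ℝ (convexHull ℝ (A : Set (EuclideanSpace ℝ (Fin d))))
            ≤ AffineSubspace.mk' x (Submodule.span ℝ {d0}) := by
          rw [affineSpan_le]
          apply convexHull_min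
          · intro s hs
            rw [Finset.mem_coe] at hs
            rw [SetLike.mem_coe, AffineSubspace.mem_mk']
            have := (hAprop s hs).2
            simpa [vsub_eq_sub] using this
          · exact (AffineSubspace.mk' x (Submodule.span ℝ {d0})).convex
        have hdir := AffineSubspace.direction_le hle
        rw [AffineSubspace.direction_mk'] at hdir
        calc Module.finrank ℝ
              (affineSpan ℝ (convexHull ℝ (A : Set (EuclideanSpace ℝ (Fin d))))).direction
            ≤ Module.finrank ℝ (Submodule.span ℝ {d0}) := Submodule.finrank_mono hdir
          _ = 1 := finrank_span_singleton hd0ne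
      · -- ≥ 1
        have hxH : x ∈ convexHull ℝ (A : Set (EuclideanSpace ℝ (Fin d))) :=
          subset_convexHull ℝ _ (Finset.mem_coe.mpr hxA)
        have ht0H : t0 ∈ convexHull ℝ (A : Set (EuclideanSpace ℝ (Fin d))) :=
          subset_convexHull ℝ _ (Finset.mem_coe.mpr ht0A)
        have hvsub : t0 - x ∈
            (affineSpan ℝ (convexHull ℝ (A : Set (EuclideanSpace ℝ (Fin d))))).direction := by
          have := AffineSubspace.vsub_mem_direction (mem_affineSpan ℝ ht0H)
            (mem_affineSpan ℝ hxH)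
          simpa [vsub_eq_sub] using this
        have hspan : Submodule.span ℝ {t0 - x}
            ≤ (affineSpan ℝ (convexHull ℝ (A : Set (EuclideanSpace ℝ (Fin d))))).direction :=
          (Submodule.span_singleton_le_iff_mem _ _).mpr hvsub
        calc (1:ℕ) = Module.finrank ℝ (Submodule.span ℝ {t0 - x}) :=
              (finrank_span_singleton (sub_ne_zero.mpr ht0x)).symm
          _ ≤ _ := Submodule.finrank_mono hspan
    · -- w in normal cone
      intro p hp y hy
      rw [hE] at hp
      have hAT : (A : Set (EuclideanSpace ℝ (Fin d))) ⊆ (T : Set _) := by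
        intro s hs
        exact Finset.mem_coe.mpr (hAprop s (Finset.mem_coe.mp hs)).1
      have hpF : p ∈ exposedFaceBy (convexHull ℝ (S : Set (EuclideanSpace ℝ (Fin d)))) w := by
        rw [hF]
        exact convexHull_mono hAT hp
      exact hpF.2 y hy
  · rintro ⟨E, ⟨⟨u, hEu⟩, hdim⟩, hNC⟩
    have hEne : E.Nonempty := by
      by_contra h
      rw [Set.not_nonempty_iff_eq_empty] at h
      rw [h, direction_affineSpan] at hdim
      rw [vectorSpan_empty, finrank_bot] at hdim
      exact absurd hdim (by norm_num)
    have hEF : E ⊆ exposedFaceBy (convexHull ℝ (S : Set (EuclideanSpace ℝ (Fin d)))) w := by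
      intro p hp
      have hpP : p ∈ convexHull ℝ (S : Set (EuclideanSpace ℝ (Fin d))) := by
        have : p ∈ exposedFaceBy (convexHull ℝ (S : Set (EuclideanSpace ℝ (Fin d)))) u := by
          rw [← hEu]; exact hp
        exact this.1
      exact ⟨hpP, fun y hy => hNC p hp y hy⟩
    rw [← hdim]
    exact Submodule.finrank_mono (AffineSubspace.direction_le (affineSpan_mono ℝ hEF))
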